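/- Fix Π ∈ (0,∞)ⁿ, a strictly increasing continuous utility u with cost C, and ℓ ∈ ℝⁿ with ℓ ≥ 0, ℓ ≠ 0. Then there exists a unique α* > 0 such that C( (α*/(1+α*))Π − (1/(1+α*))ℓ ; Π) = 0. -/

import Mathlib

/-!
Write `z = Π - x` for the post-trade holdings. The feasible cash amounts form (up to the box
`[min x, max x]`, which never binds at the infimum) the set of `c` with `u (z + c) ≥ u Π`, and
`c ↦ u (z + c)` is strictly increasing and continuous; hence `C (x; Π)` is negative, zero or
positive according as `u z` is above, at or below `u Π`. For the pool trade
`x = (α/(1+α)) Π - (1/(1+α)) ℓ` one has `z = (Π + ℓ)/(1+α)`, so `C = 0` means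
`g α = u Π` for the strictly decreasing continuous `g α = u ((Π + ℓ)/(1+α))`. Since
`g 0 = u (Π + ℓ) > u Π` and `g α < u Π` for large `α`, the intermediate value theorem and
injectivity of `g` give exactly one root `α* > 0`.
-/

open Filter Topology Set Finset

section Cost

variable {ι : Type*}

def posOrthant (ι : Type*) : Set (ι → ℝ) := {z | ∀ i, 0 < z i}

lemma isOpen_posOrthant [Finite ι] : IsOpen (posOrthant ι) := by
  simp only [posOrthant, Set.ofPred_forall]
  exact isOpen_iInter_of_finite fun i => isOpen_lt continuous_const (continuous_apply i)

lemma tendsto_shift (z : ι → ℝ) :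
    Tendsto (fun c : ℝ => fun i => z i + c) (𝓝 0) (𝓝 z) :=
  tendsto_pi_nhds.2 fun i => by
    simpa using (tendsto_const_nhds (x := z i)).add (tendsto_id (x := 𝓝 (0 : ℝ)))

lemma tendsto_utility_shift [Finite ι] {u : (ι → ℝ) → ℝ}
    (hu_cont : ContinuousOn u (posOrthant ι)) {z : ι → ℝ} (hz : z ∈ posOrthant ι) :
    Tendsto (fun c : ℝ => u fun i => z i + c) (𝓝 0) (𝓝 (u z)) :=
  (hu_cont.continuousAt (isOpen_posOrthant.mem_nhds hz)).tendsto.comp (tendsto_shift z)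

variable [Fintype ι] [Nonempty ι] {u : (ι → ℝ) → ℝ} {Pl x : ι → ℝ} {c : ℝ}

/-- The paper's cost `C (x; Π)` is the infimum of this set of cash amounts. -/
def costSet (u : (ι → ℝ) → ℝ) (Pl x : ι → ℝ) : Set ℝ :=
  {c : ℝ | c ∈ Set.Icc (univ.inf' univ_nonempty x) (univ.sup' univ_nonempty x) ∧
    (∀ i, 0 < Pl i - x i + c) ∧ u (fun i => Pl i - x i + c) ≥ u Pl}

lemma bddBelow_costSet : BddBelow (costSet u Pl x) :=
  ⟨_, fun _ hc => hc.1.1⟩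

lemma inf'_le_of_utility_le (hu : StrictMonoOn u (posOrthant ι)) (hPl : Pl ∈ posOrthant ι)
    (hc : ∀ i, 0 < Pl i - x i + c) (h : u Pl ≤ u (fun i => Pl i - x i + c)) :
    univ.inf' univ_nonempty x ≤ c := by
  by_contra! hlt
  have hx : ∀ i, c < x i := fun i => hlt.trans_le (inf'_le x (mem_univ i))
  exact (hu hc hPl (StrongLT.lt fun i => by linarith [hx i])).not_ge h

lemma le_sup'_of_utility_le (hu : StrictMonoOn u (posOrthant ι)) (hPl : Pl ∈ posOrthant ι)
    (hc : ∀ i, 0 < Pl i - x i + c) (h : u (fun i => Pl i - x i + c) ≤ u Pl) :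
    c ≤ univ.sup' univ_nonempty x := by
  by_contra! hlt
  have hx : ∀ i, x i < c := fun i => (le_sup' x (mem_univ i)).trans_lt hlt
  exact (hu hPl hc (StrongLT.lt fun i => by linarith [hx i])).not_ge h

lemma mem_costSet_of_le_sup' (hu : StrictMonoOn u (posOrthant ι)) (hPl : Pl ∈ posOrthant ι)
    (hc : ∀ i, 0 < Pl i - x i + c) (h : u Pl ≤ u (fun i => Pl i - x i + c))
    (hcM : c ≤ univ.sup' univ_nonempty x) : c ∈ costSet u Pl x :=
  ⟨⟨inf'_le_of_utility_le hu hPl hc h, hcM⟩, hc, h⟩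

lemma sup'_mem_costSet (hu : StrictMonoOn u (posOrthant ι)) (hPl : Pl ∈ posOrthant ι) :
    univ.sup' univ_nonempty x ∈ costSet u Pl x := by
  have hge : ∀ i, Pl i ≤ Pl i - x i + univ.sup' univ_nonempty x := fun i => by
    linarith [le_sup' x (mem_univ i)]
  exact mem_costSet_of_le_sup' hu hPl (fun i => (hPl i).trans_le (hge i))
    (hu.monotoneOn hPl (fun i => (hPl i).trans_le (hge i)) hge) le_rfl

lemma utility_lt_of_mem_costSet_of_neg (hu : StrictMonoOn u (posOrthant ι))
    (hz : (fun i => Pl i - x i) ∈ posOrthant ι) (hc : c ∈ costSet u Pl x) (hneg : c < 0) :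
    u Pl < u (fun i => Pl i - x i) :=
  hc.2.2.trans_lt (hu hc.2.1 hz (StrongLT.lt fun i => by linarith))

lemma sInf_costSet_eq_zero_of_eq (hu : StrictMonoOn u (posOrthant ι)) (hPl : Pl ∈ posOrthant ι)
    (hz : (fun i => Pl i - x i) ∈ posOrthant ι) (h : u (fun i => Pl i - x i) = u Pl) :
    sInf (costSet u Pl x) = 0 := by
  have hz0 : ∀ i, 0 < Pl i - x i + 0 := fun i => by simpa using hz i
  have h0 : (0 : ℝ) ∈ costSet u Pl x :=
    mem_costSet_of_le_sup' hu hPl hz0 (by simpa using h.ge)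
      (le_sup'_of_utility_le hu hPl hz0 (by simpa using h.le))
  have hlower : ∀ c ∈ costSet u Pl x, 0 ≤ c := fun c hc =>
    not_lt.1 fun hneg => (utility_lt_of_mem_costSet_of_neg hu hz hc hneg).ne' h
  exact le_antisymm (csInf_le bddBelow_costSet h0) (le_csInf ⟨0, h0⟩ hlower)

lemma sInf_costSet_pos_of_lt (hu_cont : ContinuousOn u (posOrthant ι))
    (hu : StrictMonoOn u (posOrthant ι)) (hPl : Pl ∈ posOrthant ι)
    (hz : (fun i => Pl i - x i) ∈ posOrthant ι) (h : u (fun i => Pl i - x i) < u Pl) :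
    0 < sInf (costSet u Pl x) := by
  obtain ⟨ε, hε, hball⟩ :=
    Metric.eventually_nhds_iff.1 ((tendsto_utility_shift hu_cont hz).eventually_lt_const h)
  have hlower : ∀ c ∈ costSet u Pl x, ε ≤ c := fun c hc => by
    by_contra! hcε
    rcases lt_or_ge c 0 with hneg | hnonneg
    · exact (utility_lt_of_mem_costSet_of_neg hu hz hc hneg).not_gt h
    · refine (hball ?_).not_ge hc.2.2
      rwa [Real.dist_0_eq_abs, abs_of_nonneg hnonneg]
  exact hε.trans_le (le_csInf ⟨_, sup'_mem_costSet hu hPl⟩ hlower)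

lemma sInf_costSet_neg_of_gt (hu_cont : ContinuousOn u (posOrthant ι))
    (hu : StrictMonoOn u (posOrthant ι)) (hPl : Pl ∈ posOrthant ι)
    (hz : (fun i => Pl i - x i) ∈ posOrthant ι) (h : u Pl < u (fun i => Pl i - x i)) :
    sInf (costSet u Pl x) < 0 := by
  suffices ∃ c ∈ costSet u Pl x, c < 0 by
    obtain ⟨c, hc, hneg⟩ := this
    exact (csInf_le bddBelow_costSet hc).trans_lt hneg
  rcases lt_or_ge (univ.sup' univ_nonempty x) 0 with hM | hM
  · exact ⟨_, sup'_mem_costSet hu hPl, hM⟩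
  have hnear : ∀ᶠ c in 𝓝 (0 : ℝ),
      u Pl < u (fun i => Pl i - x i + c) ∧ (fun i => Pl i - x i + c) ∈ posOrthant ι :=
    ((tendsto_utility_shift hu_cont hz).eventually_const_lt h).and
      ((tendsto_shift _).eventually (isOpen_posOrthant.mem_nhds hz))
  obtain ⟨c, hneg, hutil, hpos⟩ := hnear.exists_lt
  exact ⟨c, mem_costSet_of_le_sup' hu hPl hpos hutil.le (hneg.le.trans hM), hneg⟩

lemma sInf_costSet_eq_zero_iff (hu_cont : ContinuousOn u (posOrthant ι))
    (hu : StrictMonoOn u (posOrthant ι)) (hPl : Pl ∈ posOrthant ι)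
    (hz : (fun i => Pl i - x i) ∈ posOrthant ι) :
    sInf (costSet u Pl x) = 0 ↔ u (fun i => Pl i - x i) = u Pl := by
  refine ⟨fun h0 => ?_, sInf_costSet_eq_zero_of_eq hu hPl hz⟩
  rcases lt_trichotomy (u fun i => Pl i - x i) (u Pl) with hlt | heq | hgt
  · exact absurd h0 (sInf_costSet_pos_of_lt hu_cont hu hPl hz hlt).ne'
  · exact heq
  · exact absurd h0 (sInf_costSet_neg_of_gt hu_cont hu hPl hz hgt).ne

end Cost

lemma existsUnique_pos_eq_of_strictAntiOn {g : ℝ → ℝ} {t A : ℝ}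
    (hg : StrictAntiOn g (Ici 0)) (hcont : ContinuousOn g (Ici 0)) (h0 : t < g 0)
    (hA : 0 ≤ A) (hgA : g A < t) :
    ∃! α, 0 < α ∧ g α = t := by
  obtain ⟨α, ⟨hα0, -⟩, hα⟩ :=
    intermediate_value_Ioc' hA (hcont.mono Icc_subset_Ici_self) ⟨hgA.le, h0⟩
  exact ⟨α, ⟨hα0, hα⟩, fun β ⟨hβ0, hβ⟩ =>
    hg.injOn (mem_Ici.2 hβ0.le) (mem_Ici.2 hα0.le) (hβ.trans hα.symm)⟩

section Pool

variable {ι : Type*} {w : ι → ℝ}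

lemma div_one_add_mem_posOrthant (hw : w ∈ posOrthant ι) {α : ℝ} (hα : -1 < α) :
    (fun i => w i / (1 + α)) ∈ posOrthant ι :=
  fun i => div_pos (hw i) (by linarith)

lemma strictAntiOn_div_one_add [Nonempty ι] (hw : w ∈ posOrthant ι) :
    StrictAntiOn (fun α : ℝ => fun i => w i / (1 + α)) (Ioi (-1)) :=
  fun s hs t _ hst => StrongLT.lt fun i =>
    div_lt_div_of_pos_left (hw i) (by linarith [mem_Ioi.1 hs]) (by linarith)

lemma continuousOn_div_one_add :
    ContinuousOn (fun α : ℝ => fun i => w i / (1 + α)) (Ioi (-1)) :=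
  continuousOn_pi.2 fun _ => continuousOn_const.div (by fun_prop) fun α hα => by
    linarith [mem_Ioi.1 hα]

lemma eventually_div_one_add_lt [Finite ι] {v : ι → ℝ} (hv : v ∈ posOrthant ι) :
    ∀ᶠ α : ℝ in atTop, ∀ i, w i / (1 + α) < v i :=
  eventually_all.2 fun i => (tendsto_const_nhds.div_atTop
    (tendsto_atTop_add_const_left _ 1 tendsto_id)).eventually_lt_const (hv i)

lemma sub_pool_trade {α : ℝ} (hα : 1 + α ≠ 0) (p l : ℝ) :
    p - (α / (1 + α) * p - 1 / (1 + α) * l) = (p + l) / (1 + α) := by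
  field_simp
  ring

end Pool

theorem stmt_15 (n : ℕ) [Nonempty (Fin n)] (u : (Fin n → ℝ) → ℝ)
    (hu_cont : ContinuousOn u {z : Fin n → ℝ | ∀ i, 0 < z i})
    (hu_mono : ∀ z w : Fin n → ℝ, (∀ i, 0 < z i) → (∀ i, 0 < w i) →
      (∀ i, z i ≤ w i) → z ≠ w → u z < u w)
    (Pl : Fin n → ℝ) (hPl : ∀ i, 0 < Pl i)
    (C : (Fin n → ℝ) → ℝ)
    (hC : ∀ x : Fin n → ℝ, C x = sInf {c : ℝ |
      c ∈ Set.Icc (Finset.univ.inf' Finset.univ_nonempty x) (Finset.univ.sup' Finset.univ_nonempty x) ∧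
      (∀ i, 0 < Pl i - x i + c) ∧ u (fun i => Pl i - x i + c) ≥ u Pl})
    (ℓ : Fin n → ℝ) (hℓ : ∀ i, 0 ≤ ℓ i) (hℓ0 : ℓ ≠ 0) :
    ∃! α : ℝ, 0 < α ∧
      C (fun i => (α / (1 + α)) * Pl i - (1 / (1 + α)) * ℓ i) = 0 := by
  have hu : StrictMonoOn u (posOrthant (Fin n)) := fun z hz w hw hzw =>
    hu_mono z w hz hw hzw.le hzw.ne
  have hw : Pl + ℓ ∈ posOrthant (Fin n) := fun i => add_pos_of_pos_of_nonneg (hPl i) (hℓ i)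
  have hI : Ici (0 : ℝ) ⊆ Ioi (-1) := Ici_subset_Ioi.2 (by norm_num)
  set g : ℝ → ℝ := fun α => u fun i => (Pl + ℓ) i / (1 + α)
  have hC_eq_zero : ∀ α, 0 < α →
      (C (fun i => (α / (1 + α)) * Pl i - (1 / (1 + α)) * ℓ i) = 0 ↔ g α = u Pl) := by
    intro α hα
    have hz : (fun i => Pl i - (α / (1 + α) * Pl i - 1 / (1 + α) * ℓ i)) =
        fun i => (Pl + ℓ) i / (1 + α) := funext fun i => sub_pool_trade (by linarith) _ _
    rw [hC]
    refine (sInf_costSet_eq_zero_iff hu_cont hu hPl ?_).trans (by rw [hz])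
    exact hz ▸ div_one_add_mem_posOrthant hw (by linarith)
  have hmaps :
      MapsTo (fun α : ℝ => fun i => (Pl + ℓ) i / (1 + α)) (Ici 0) (posOrthant (Fin n)) :=
    fun α hα => div_one_add_mem_posOrthant hw (hI hα)
  have hg_anti : StrictAntiOn g (Ici 0) :=
    hu.comp_strictAntiOn ((strictAntiOn_div_one_add hw).mono hI) hmaps
  have hg_cont : ContinuousOn g (Ici 0) := hu_cont.comp (continuousOn_div_one_add.mono hI) hmaps
  have hg0 : u Pl < g 0 := by
    have hg0_eq : g 0 = u (Pl + ℓ) := by simp only [g, add_zero, div_one]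
    rw [hg0_eq]
    exact hu hPl hw (lt_add_of_pos_right Pl (lt_of_le_of_ne hℓ hℓ0.symm))
  obtain ⟨A, hA0, hA⟩ := ((eventually_ge_atTop 0).and (eventually_div_one_add_lt hPl)).exists
  have hgA : g A < u Pl := hu (div_one_add_mem_posOrthant hw (by linarith)) hPl (StrongLT.lt hA)
  exact (existsUnique_congr fun α => and_congr_right (hC_eq_zero α)).2
    (existsUnique_pos_eq_of_strictAntiOn hg_anti hg_cont hg0 hA0 hgA)
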